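/- arXiv:2210.15714 — 9 statements merged into one kernel-verified Lean document; each statement's English description precedes it below -/
import Mathlib

section
/- Let σ be a finite set of size k+i+1 with i ≥ 1 and let c be a subset of σ of size k. Then the collection r = { c ∪ {v} : v ∈ σ \ c } is the unique collection of (k+1)-element subsets of σ satisfying: every element of r contains c, the union of the sets in r equals σ, the intersection of all sets in r equals c, and |r| = i+1. -/
/-- The core of a collection of finite sets: the elements common to all of them. -/
def coreOf {α : Type*} [DecidableEq α] (S : Finset (Finset α)) : Finset α :=
  (S.sup id).filter (fun x => ∀ t ∈ S, x ∈ t)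

theorem singular_representation_per_core {α : Type*} [DecidableEq α]
    (k i : ℕ) (hi : 1 ≤ i) (σ c : Finset α)
    (hσ : σ.card = k + i + 1) (hc : c ⊆ σ) (hck : c.card = k) :
    ∀ r : Finset (Finset α),
      ((∀ t ∈ r, t ⊆ σ ∧ t.card = k + 1 ∧ c ⊆ t) ∧
        r.sup id = σ ∧ coreOf r = c ∧ r.card = i + 1)
      ↔ r = (σ \ c).image (fun v => insert v c) := by
  have hsd : (σ \ c).card = i + 1 := by
    rw [Finset.card_sdiff_of_subset hc, hσ, hck]; omega
  have hinj : Set.InjOn (fun v => insert v c) (((σ \ c) : Finset α) : Set α) := by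
    intro x hx y hy hxy
    simp only [Finset.mem_coe, Finset.mem_sdiff] at hx hy
    have : x ∈ insert y c := by simp only at hxy; rw [← hxy]; exact Finset.mem_insert_self x c
    rcases Finset.mem_insert.1 this with h | h
    · exact h
    · exact absurd h hx.2
  have himgcard : ((σ \ c).image (fun v => insert v c)).card = i + 1 := by
    rw [Finset.card_image_of_injOn hinj, hsd]
  intro r
  constructor
  · rintro ⟨h1, hsup, hcore, hcard⟩
    have hsub : r ⊆ (σ \ c).image (fun v => insert v c) := by
      intro t ht
      obtain ⟨htσ, htc, hct⟩ := h1 t ht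
      have h1' : (t \ c).card = 1 := by
        rw [Finset.card_sdiff_of_subset hct, htc, hck]; omega
      obtain ⟨v, hv⟩ := Finset.card_eq_one.1 h1'
      have hvmem : v ∈ t \ c := hv ▸ Finset.mem_singleton_self v
      have hvsd : v ∈ σ \ c := Finset.mem_sdiff.2 ⟨htσ (Finset.mem_sdiff.1 hvmem).1,
        (Finset.mem_sdiff.1 hvmem).2⟩
      refine Finset.mem_image.2 ⟨v, hvsd, ?_⟩
      apply Finset.Subset.antisymm
      · intro x hx
        rcases Finset.mem_insert.1 hx with h | h
        · exact h ▸ (Finset.mem_sdiff.1 hvmem).1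
        · exact hct h
      · intro x hx
        by_cases hxc : x ∈ c
        · exact Finset.mem_insert_of_mem hxc
        · have : x ∈ t \ c := Finset.mem_sdiff.2 ⟨hx, hxc⟩
          rw [hv, Finset.mem_singleton] at this
          exact this ▸ Finset.mem_insert_self x c
    exact Finset.eq_of_subset_of_card_le hsub (by rw [himgcard, hcard])
  · rintro rfl
    have hne : 0 < (σ \ c).card := by omega
    have hsupσ : ((σ \ c).image (fun v => insert v c)).sup id = σ := by
      ext x
      rw [Finset.mem_sup]
      constructor
      · rintro ⟨t, ht, hxt⟩
        obtain ⟨v, hv, rfl⟩ := Finset.mem_image.1 ht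
        rw [Finset.mem_sdiff] at hv
        exact Finset.insert_subset hv.1 hc hxt
      · intro hx
        by_cases hxc : x ∈ c
        · obtain ⟨v, hv⟩ := Finset.card_pos.1 hne
          exact ⟨insert v c, Finset.mem_image.2 ⟨v, hv, rfl⟩, Finset.mem_insert_of_mem hxc⟩
        · exact ⟨insert x c, Finset.mem_image.2 ⟨x, Finset.mem_sdiff.2 ⟨hx, hxc⟩, rfl⟩,
            Finset.mem_insert_self x c⟩
    refine ⟨?_, hsupσ, ?_, himgcard⟩
    · intro t ht
      obtain ⟨v, hv, rfl⟩ := Finset.mem_image.1 ht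
      rw [Finset.mem_sdiff] at hv
      refine ⟨Finset.insert_subset hv.1 hc, ?_, Finset.subset_insert _ _⟩
      rw [Finset.card_insert_of_notMem hv.2, hck]
    · ext x
      simp only [coreOf, Finset.mem_filter, hsupσ]
      constructor
      · rintro ⟨hxσ, hall⟩
        by_contra hxc
        obtain ⟨w, hw, hwx⟩ := Finset.exists_mem_ne (by omega : 1 < (σ \ c).card) x
        have := hall (insert w c) (Finset.mem_image.2 ⟨w, hw, rfl⟩)
        rcases Finset.mem_insert.1 this with h | h
        · exact hwx h.symm
        · exact hxc h
      · intro hxc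
        refine ⟨hc hxc, fun t ht => ?_⟩
        obtain ⟨v, hv, rfl⟩ := Finset.mem_image.1 ht
        exact Finset.mem_insert_of_mem hxc
end

section
/- Let σ be a finite set of size k+i+1 with i ≥ 1, and let c₁, c₂ be two distinct k-element subsets of σ. Then the representations r_{c₁}(σ) = {c₁ ∪ {v} : v ∈ σ \ c₁} and r_{c₂}(σ) = {c₂ ∪ {v} : v ∈ σ \ c₂} are distinct. -/
theorem representations_with_distinct_cores_are_distinct {α : Type*} [DecidableEq α]
    (k i : ℕ) (hi : 1 ≤ i) (σ c₁ c₂ : Finset α)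
    (hσ : σ.card = k + i + 1)
    (hc₁ : c₁ ⊆ σ) (hck₁ : c₁.card = k)
    (hc₂ : c₂ ⊆ σ) (hck₂ : c₂.card = k)
    (hne : c₁ ≠ c₂) :
    (σ \ c₁).image (fun v => insert v c₁) ≠ (σ \ c₂).image (fun v => insert v c₂) := by
  intro h
  have hcard : 1 < (σ \ c₁).card := by
    rw [Finset.card_sdiff_of_subset hc₁, hσ, hck₁]
    omega
  obtain ⟨v, hv, w, hw, hvw⟩ := Finset.one_lt_card.mp hcard
  have hmemv : insert v c₁ ∈ (σ \ c₂).image (fun v => insert v c₂) := by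
    rw [← h]; exact Finset.mem_image_of_mem _ hv
  have hmemw : insert w c₁ ∈ (σ \ c₂).image (fun v => insert v c₂) := by
    rw [← h]; exact Finset.mem_image_of_mem _ hw
  obtain ⟨a, -, ha⟩ := Finset.mem_image.mp hmemv
  obtain ⟨b, -, hb⟩ := Finset.mem_image.mp hmemw
  have hsub : c₂ ⊆ c₁ := by
    intro x hx
    have hx1 : x ∈ insert v c₁ := ha ▸ Finset.mem_insert_of_mem hx
    have hx2 : x ∈ insert w c₁ := hb ▸ Finset.mem_insert_of_mem hx
    rcases Finset.mem_insert.mp hx1 with rfl | h1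
    · rcases Finset.mem_insert.mp hx2 with rfl | h2
      · exact absurd rfl hvw
      · exact h2
    · exact h1
  exact hne (Finset.eq_of_subset_of_card_le hsub (by omega)).symm
end

section
/- Let σ be a finite set of size k+i+1 with i ≥ 1. The number of collections r of (k+1)-element subsets of σ such that ⋃r = σ and |⋂r| = k is exactly C(k+i+1, k). -/
private lemma repOf_props {α : Type*} [DecidableEq α] (k i : ℕ) (hi : 1 ≤ i)
    (σ : Finset α) (hσ : σ.card = k + i + 1) (c : Finset α) (hc : c ⊆ σ)
    (hck : c.card = k) :
    (∀ t ∈ (σ \ c).image (fun x => insert x c), t.card = k + 1) ∧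
    ((σ \ c).image (fun x => insert x c)).sup id = σ ∧
    coreOf ((σ \ c).image (fun x => insert x c)) = c := by
  have hsd : (σ \ c).card = i + 1 := by
    rw [Finset.card_sdiff_of_subset hc, hσ, hck]; omega
  have hcard : ∀ t ∈ (σ \ c).image (fun x => insert x c), t.card = k + 1 := by
    intro t ht
    obtain ⟨x, hx, rfl⟩ := Finset.mem_image.mp ht
    rw [Finset.card_insert_of_notMem (Finset.mem_sdiff.mp hx).2, hck]
  have hsup : ((σ \ c).image (fun x => insert x c)).sup id = σ := by
    apply subset_antisymm
    · intro y hy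
      rw [Finset.mem_sup] at hy
      obtain ⟨t, ht, hyt⟩ := hy
      obtain ⟨x, hx, rfl⟩ := Finset.mem_image.mp ht
      exact Finset.insert_subset (Finset.mem_sdiff.mp hx).1 hc hyt
    · intro y hy
      rw [Finset.mem_sup]
      by_cases hyc : y ∈ c
      · obtain ⟨x, hx⟩ := Finset.card_pos.mp (by omega : 0 < (σ \ c).card)
        exact ⟨insert x c, Finset.mem_image_of_mem _ hx, Finset.mem_insert_of_mem hyc⟩
      · exact ⟨insert y c, Finset.mem_image_of_mem _ (Finset.mem_sdiff.mpr ⟨hy, hyc⟩),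
          Finset.mem_insert_self _ _⟩
  refine ⟨hcard, hsup, ?_⟩
  ext y
  rw [coreOf, hsup, Finset.mem_filter]
  constructor
  · rintro ⟨hyσ, hall⟩
    by_contra hyc
    have hy' : y ∈ σ \ c := Finset.mem_sdiff.mpr ⟨hyσ, hyc⟩
    obtain ⟨x, hx, hxy⟩ := Finset.exists_mem_ne (s := σ \ c) (by omega) y
    have := hall (insert x c) (Finset.mem_image_of_mem _ hx)
    rcases Finset.mem_insert.mp this with h | h
    · exact hxy h.symm
    · exact hyc h
  · intro hyc
    refine ⟨hc hyc, ?_⟩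
    intro t ht
    obtain ⟨x, hx, rfl⟩ := Finset.mem_image.mp ht
    exact Finset.mem_insert_of_mem hyc

private lemma rep_eq {α : Type*} [DecidableEq α] (k i : ℕ)
    (σ : Finset α) (hσ : σ.card = k + i + 1) (r : Finset (Finset α))
    (h1 : ∀ t ∈ r, t.card = k + 1) (h2 : r.sup id = σ)
    (h3 : (coreOf r).card = k) :
    coreOf r ⊆ σ ∧ r = (σ \ coreOf r).image (fun x => insert x (coreOf r)) := by
  set c := coreOf r with hc
  have hcσ : c ⊆ σ := by
    rw [hc, coreOf, h2]; exact Finset.filter_subset _ _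
  have hct : ∀ t ∈ r, c ⊆ t := by
    intro t ht y hy
    rw [hc, coreOf, Finset.mem_filter] at hy
    exact hy.2 t ht
  have hform : ∀ t ∈ r, ∃ x ∈ σ \ c, t = insert x c := by
    intro t ht
    have htσ : t ⊆ σ := h2 ▸ Finset.le_sup (f := id) ht
    have h1' : (t \ c).card = 1 := by
      rw [Finset.card_sdiff_of_subset (hct t ht), h1 t ht, h3]; omega
    obtain ⟨x, hx⟩ := Finset.card_eq_one.mp h1'
    have hxt : x ∈ t \ c := hx ▸ Finset.mem_singleton_self x
    refine ⟨x, Finset.mem_sdiff.mpr ⟨htσ (Finset.mem_sdiff.mp hxt).1,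
      (Finset.mem_sdiff.mp hxt).2⟩, ?_⟩
    apply subset_antisymm
    · intro y hy
      by_cases hyc : y ∈ c
      · exact Finset.mem_insert_of_mem hyc
      · have : y ∈ t \ c := Finset.mem_sdiff.mpr ⟨hy, hyc⟩
        rw [hx, Finset.mem_singleton] at this
        exact this ▸ Finset.mem_insert_self _ _
    · exact Finset.insert_subset (Finset.mem_sdiff.mp hxt).1 (hct t ht)
  refine ⟨hcσ, subset_antisymm ?_ ?_⟩
  · intro t ht
    obtain ⟨x, hx, rfl⟩ := hform t ht
    exact Finset.mem_image_of_mem _ hx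
  · intro t ht
    obtain ⟨x, hx, rfl⟩ := Finset.mem_image.mp ht
    have hxσ : x ∈ σ := (Finset.mem_sdiff.mp hx).1
    have hxc : x ∉ c := (Finset.mem_sdiff.mp hx).2
    rw [← h2, Finset.mem_sup] at hxσ
    obtain ⟨t', ht', hxt'⟩ := hxσ
    obtain ⟨x', hx', rfl⟩ := hform t' ht'
    rcases Finset.mem_insert.mp hxt' with h | h
    · exact h ▸ ht'
    · exact absurd h hxc

theorem number_of_representations {α : Type*} [DecidableEq α]
    (k i : ℕ) (hi : 1 ≤ i) (σ : Finset α) (hσ : σ.card = k + i + 1) :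
    ((σ.powerset.powerset).filter
        (fun r : Finset (Finset α) =>
          (∀ t ∈ r, t.card = k + 1) ∧ r.sup id = σ ∧ (coreOf r).card = k)).card
      = (k + i + 1).choose k := by
  classical
  have himg : ((σ.powerset.powerset).filter
        (fun r : Finset (Finset α) =>
          (∀ t ∈ r, t.card = k + 1) ∧ r.sup id = σ ∧ (coreOf r).card = k))
      = (σ.powersetCard k).image (fun c => (σ \ c).image (fun x => insert x c)) := by
    ext r
    rw [Finset.mem_filter, Finset.mem_image]
    constructor
    · rintro ⟨-, h1, h2, h3⟩
      obtain ⟨hcσ, hr⟩ := rep_eq k i σ hσ r h1 h2 h3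
      exact ⟨coreOf r, Finset.mem_powersetCard.mpr ⟨hcσ, h3⟩, hr.symm⟩
    · rintro ⟨c, hc, rfl⟩
      obtain ⟨hcσ, hck⟩ := Finset.mem_powersetCard.mp hc
      obtain ⟨p1, p2, p3⟩ := repOf_props k i hi σ hσ c hcσ hck
      refine ⟨?_, p1, p2, by rw [p3, hck]⟩
      rw [Finset.mem_powerset]
      intro t ht
      rw [Finset.mem_powerset, ← p2]
      exact Finset.le_sup (f := id) ht
  rw [himg, Finset.card_image_of_injOn, Finset.card_powersetCard, hσ]
  intro c₁ hc₁ c₂ hc₂ heq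
  simp only [Finset.mem_coe, Finset.mem_powersetCard] at hc₁ hc₂
  have e₁ := (repOf_props k i hi σ hσ c₁ hc₁.1 hc₁.2).2.2
  have e₂ := (repOf_props k i hi σ hσ c₂ hc₂.1 hc₂.2).2.2
  dsimp only at heq
  rw [← e₁, ← e₂, heq]
end

section
/- Let X be a pure d-dimensional simplicial complex and let σ ∈ X(k+i) be a face with i ≥ 1. For any core c ∈ C(σ, k), the weight of the representation r_c(σ) in the representation complex R̂_k(X) equals w_X(σ) / C(k+i+1, k), where w denotes the standard weight function. -/
/-- The `k`-dimensional representation complex of `X`: its vertices are the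
`k`-faces of `X`, and its `i`-faces (for `i ≥ 1`) are collections of `i+1`
`k`-faces whose union is a `(k+i)`-face of `X` and whose common intersection
has exactly `k` elements. -/
def repCplx {α : Type*} [DecidableEq α] (X : Finset (Finset α)) (k : ℕ) :
    Finset (Finset (Finset α)) :=
  ((X.filter (fun t => t.card = k + 1)).powerset).filter
    (fun r => r.Nonempty ∧ r.sup id ∈ X ∧ (r.sup id).card = k + r.card ∧
      (2 ≤ r.card → (coreOf r).card = k))

/-- Top-dimensional faces of a `D`-dimensional complex. -/
def topFaces {β : Type*} [DecidableEq β] (Y : Finset (Finset β)) (D : ℕ) :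
    Finset (Finset β) :=
  Y.filter (fun τ => τ.card = D + 1)

/-- The standard weight of a face of a `D`-dimensional complex. -/
def faceWeight {β : Type*} [DecidableEq β] (Y : Finset (Finset β)) (D : ℕ)
    (σ : Finset β) : ℚ :=
  (((topFaces Y D).filter (fun τ => σ ⊆ τ)).card : ℚ) /
    (((D + 1).choose σ.card : ℚ) * ((topFaces Y D).card : ℚ))

/-!
A top face of `R̂_k(X)` is `r_c(T) = {c ∪ {v} : v ∈ T \ c}` for a unique top face `T` of `X`
(its union) and a unique `k`-subset `c ⊆ T` (its core), so `R̂_k(X)` has `C(d+1, k)` times as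
many top faces as `X`. Since the core can only shrink when a representation is enlarged, the top
faces of `R̂_k(X)` containing `r_c(σ)` are exactly the `r_c(T)` with `σ ⊆ T`, so the two
numerators of the weights agree, while the denominators are related by
`C(d-k+1, i+1) C(d+1, k) = C(d+1, k+i+1) C(k+i+1, k)`.
-/

open Finset

namespace RepresentationComplex

variable {α : Type*} [DecidableEq α]

/-- The representation `r_c(T)` of a face `T` with core `c`. -/
def rep (c T : Finset α) : Finset (Finset α) := (T \ c).image (insert · c)

theorem card_rep (c T : Finset α) : #(rep c T) = #(T \ c) :=
  card_image_of_injOn fun _ hu _ _ h => (insert_inj (mem_sdiff.mp hu).2).mp h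

theorem sup_rep {c T : Finset α} (hc : c ⊆ T) (hT : (T \ c).Nonempty) :
    (rep c T).sup id = T := by
  rw [rep, sup_image]
  apply le_antisymm
  · exact Finset.sup_le fun v hv => insert_subset (mem_sdiff.mp hv).1 hc
  · intro x hx
    obtain ⟨w, hw⟩ := hT
    by_cases hxc : x ∈ c
    · exact mem_sup.mpr ⟨w, hw, mem_insert_of_mem hxc⟩
    · exact mem_sup.mpr ⟨x, mem_sdiff.mpr ⟨hx, hxc⟩, mem_insert_self x c⟩

theorem rep_mono {c σ T : Finset α} (h : σ ⊆ T) : rep c σ ⊆ rep c T :=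
  image_subset_image (sdiff_subset_sdiff h Subset.rfl)

theorem coreOf_anti {S S' : Finset (Finset α)} (hS : S.Nonempty) (h : S ⊆ S') :
    coreOf S' ⊆ coreOf S := by
  intro x hx
  have hxS : ∀ t ∈ S, x ∈ t := fun t ht => (mem_filter.mp hx).2 t (h ht)
  obtain ⟨t, ht⟩ := hS
  exact mem_filter.mpr ⟨mem_sup.mpr ⟨t, ht, hxS t ht⟩, hxS⟩

theorem coreOf_rep {c T : Finset α} (hc : c ⊆ T) (hT : 2 ≤ #(T \ c)) :
    coreOf (rep c T) = c := by
  obtain ⟨u, hu, v, hv, huv⟩ := one_lt_card.mp hT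
  apply subset_antisymm
  · intro x hx
    have hxu := (mem_filter.mp hx).2 _ (mem_image_of_mem _ hu)
    have hxv := (mem_filter.mp hx).2 _ (mem_image_of_mem _ hv)
    rcases mem_insert.mp hxu with rfl | hxc
    · exact (mem_insert.mp hxv).resolve_left huv
    · exact hxc
  · intro x hxc
    refine mem_filter.mpr ⟨?_, fun t ht => ?_⟩
    · rw [sup_rep hc ⟨u, hu⟩]; exact hc hxc
    · obtain ⟨v, -, rfl⟩ := mem_image.mp ht
      exact mem_insert_of_mem hxc

theorem mem_rep_of_card_eq {c T t : Finset α} {k : ℕ} (hct : c ⊆ t) (htT : t ⊆ T)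
    (hc : #c = k) (ht : #t = k + 1) : t ∈ rep c T := by
  obtain ⟨v, hv⟩ := card_eq_one.mp (by rw [card_sdiff_of_subset hct, ht, hc]; omega :
    #(t \ c) = 1)
  have hvt : v ∈ t \ c := hv ▸ mem_singleton_self v
  refine mem_image.mpr ⟨v, sdiff_subset_sdiff htT Subset.rfl hvt, ?_⟩
  rw [insert_eq, ← hv, union_comm, union_sdiff_of_subset hct]

theorem card_coreOf_of_mem_repCplx {X : Finset (Finset α)} {k : ℕ} {r : Finset (Finset α)}
    (hr : r ∈ repCplx X k) (h2 : 2 ≤ #r) : #(coreOf r) = k :=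
  (mem_filter.mp hr).2.2.2.2 h2

theorem eq_rep_of_mem_repCplx {X : Finset (Finset α)} {k : ℕ} {r : Finset (Finset α)}
    (hr : r ∈ repCplx X k) (h2 : 2 ≤ #r) : r = rep (coreOf r) (r.sup id) := by
  obtain ⟨hsub, -, -, hsup, -⟩ := mem_filter.mp hr
  have hcore := card_coreOf_of_mem_repCplx hr h2
  have hrep : r ⊆ rep (coreOf r) (r.sup id) := fun t ht =>
    mem_rep_of_card_eq (fun x hx => (mem_filter.mp hx).2 t ht) (le_sup (f := id) ht) hcore
      (mem_filter.mp (mem_powerset.mp hsub ht)).2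
  have hcore_sub : coreOf r ⊆ r.sup id := filter_subset _ _
  refine eq_of_subset_of_card_le hrep ?_
  rw [card_rep, card_sdiff_of_subset hcore_sub, hsup, hcore]
  omega

theorem rep_mem_repCplx {X : Finset (Finset α)} {k : ℕ}
    (hclosed : ∀ τ ∈ X, ∀ σ ⊆ τ, σ ∈ X) {c T : Finset α} (hTX : T ∈ X) (hcT : c ⊆ T)
    (hc : #c = k) (hT : 2 ≤ #(T \ c)) : rep c T ∈ repCplx X k := by
  have hne : (T \ c).Nonempty := card_pos.mp (by omega)
  refine mem_filter.mpr ⟨mem_powerset.mpr fun t ht => ?_, hne.image _, ?_, ?_, fun _ => ?_⟩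
  · obtain ⟨v, hv, rfl⟩ := mem_image.mp ht
    refine mem_filter.mpr ⟨hclosed T hTX _ (insert_subset (mem_sdiff.mp hv).1 hcT), ?_⟩
    rw [card_insert_of_notMem (mem_sdiff.mp hv).2, hc]
  · rwa [sup_rep hcT hne]
  · rw [sup_rep hcT hne, card_rep, card_sdiff_of_subset hcT, hc]
    have := card_le_card hcT
    omega
  · rw [coreOf_rep hcT hT, hc]

variable {X : Finset (Finset α)} {d k : ℕ}

theorem sup_mem_topFaces {r : Finset (Finset α)} (hk : k ≤ d)
    (hr : r ∈ topFaces (repCplx X k) (d - k)) : r.sup id ∈ topFaces X d := by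
  obtain ⟨hrX, hr⟩ := mem_filter.mp hr
  obtain ⟨-, -, hsupX, hsup, -⟩ := mem_filter.mp hrX
  exact mem_filter.mpr ⟨hsupX, by omega⟩

theorem rep_mem_topFaces (hclosed : ∀ τ ∈ X, ∀ σ ⊆ τ, σ ∈ X) (hk : k < d)
    {c T : Finset α} (hT : T ∈ topFaces X d) (hcT : c ⊆ T) (hc : #c = k) :
    rep c T ∈ topFaces (repCplx X k) (d - k) := by
  obtain ⟨hTX, hTd⟩ := mem_filter.mp hT
  have hTc : #(T \ c) = d + 1 - k := by rw [card_sdiff_of_subset hcT, hTd, hc]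
  exact mem_filter.mpr ⟨rep_mem_repCplx hclosed hTX hcT hc (by omega), by rw [card_rep]; omega⟩

theorem two_le_card_of_mem_topFaces {r : Finset (Finset α)} (hk : k < d)
    (hr : r ∈ topFaces (repCplx X k) (d - k)) : 2 ≤ #r := by
  rw [(mem_filter.mp hr).2]; omega

theorem two_le_card_sdiff_of_mem_topFaces {c T : Finset α} (hk : k < d) (hT : T ∈ topFaces X d)
    (hc : #c = k) : 2 ≤ #(T \ c) := by
  have := le_card_sdiff c T
  rw [(mem_filter.mp hT).2, hc] at this
  omega

theorem card_topFaces_repCplx (hclosed : ∀ τ ∈ X, ∀ σ ⊆ τ, σ ∈ X) (hk : k < d) :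
    #(topFaces (repCplx X k) (d - k)) = (d + 1).choose k * #(topFaces X d) := by
  have hbij : #(topFaces (repCplx X k) (d - k)) = #((topFaces X d).sigma (powersetCard k)) := by
    refine card_nbij' (fun r => ⟨r.sup id, coreOf r⟩) (fun p => rep p.2 p.1) ?_ ?_ ?_ ?_
    · intro r hr
      exact mem_sigma.mpr ⟨sup_mem_topFaces hk.le hr, mem_powersetCard.mpr ⟨filter_subset _ _,
        card_coreOf_of_mem_repCplx (mem_filter.mp hr).1 (two_le_card_of_mem_topFaces hk hr)⟩⟩
    · intro p hp
      obtain ⟨hT, hc⟩ := mem_sigma.mp hp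
      exact rep_mem_topFaces hclosed hk hT (mem_powersetCard.mp hc).1 (mem_powersetCard.mp hc).2
    · intro r hr
      exact (eq_rep_of_mem_repCplx (mem_filter.mp hr).1 (two_le_card_of_mem_topFaces hk hr)).symm
    · rintro ⟨T, c⟩ hp
      obtain ⟨hT, hc⟩ := mem_sigma.mp hp
      obtain ⟨hcT, hck⟩ := mem_powersetCard.mp hc
      have hTc := two_le_card_sdiff_of_mem_topFaces hk hT hck
      simp only [sup_rep hcT (card_pos.mp (by omega)), coreOf_rep hcT hTc]
  rw [hbij, card_sigma, sum_congr rfl fun T hT => by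
    rw [card_powersetCard, (mem_filter.mp hT).2], sum_const, smul_eq_mul, mul_comm]

theorem card_topFaces_repCplx_filter_rep_subset (hclosed : ∀ τ ∈ X, ∀ σ ⊆ τ, σ ∈ X)
    (hk : k < d) {σ c : Finset α} (hcσ : c ⊆ σ) (hc : #c = k) (hσ : 2 ≤ #(σ \ c)) :
    #((topFaces (repCplx X k) (d - k)).filter (rep c σ ⊆ ·))
      = #((topFaces X d).filter (σ ⊆ ·)) := by
  have hcore {r} (hr : r ∈ topFaces (repCplx X k) (d - k)) (hσr : rep c σ ⊆ r) :
      coreOf r = c := by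
    refine eq_of_subset_of_card_le ?_ ?_
    · rw [← coreOf_rep hcσ hσ]
      exact coreOf_anti ((card_pos.mp (by omega : 0 < #(σ \ c))).image _) hσr
    · rw [hc, card_coreOf_of_mem_repCplx (mem_filter.mp hr).1 (two_le_card_of_mem_topFaces hk hr)]
  refine card_nbij' (fun r => r.sup id) (rep c) ?_ ?_ ?_ ?_
  · intro r hr
    obtain ⟨hr, hσr⟩ := mem_filter.mp hr
    refine mem_filter.mpr ⟨sup_mem_topFaces hk.le hr, ?_⟩
    rw [← sup_rep hcσ (card_pos.mp (by omega))]
    exact sup_mono hσr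
  · intro T hT
    obtain ⟨hT, hσT⟩ := mem_filter.mp hT
    exact mem_filter.mpr ⟨rep_mem_topFaces hclosed hk hT (hcσ.trans hσT) hc, rep_mono hσT⟩
  · intro r hr
    obtain ⟨hr, hσr⟩ := mem_filter.mp hr
    have := eq_rep_of_mem_repCplx (mem_filter.mp hr).1 (two_le_card_of_mem_topFaces hk hr)
    rwa [hcore hr hσr, eq_comm] at this
  · intro T hT
    obtain ⟨hT, hσT⟩ := mem_filter.mp hT
    have := two_le_card_sdiff_of_mem_topFaces hk hT hc
    exact sup_rep (hcσ.trans hσT) (card_pos.mp (by omega))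

end RepresentationComplex

theorem Nat.choose_sub_mul_choose {n k j : ℕ} :
    (n - k).choose j * n.choose k = n.choose (k + j) * (k + j).choose k := by
  rw [Nat.choose_mul (Nat.le_add_right k j), Nat.add_sub_cancel_left, mul_comm]

open RepresentationComplex in
theorem weight_relation_between_complex_and_representation {α : Type*} [DecidableEq α]
    (X : Finset (Finset α)) (d k i : ℕ)
    (hclosed : ∀ τ ∈ X, ∀ σ ⊆ τ, σ ∈ X)
    (hpure : ∀ τ ∈ X, ∃ T ∈ X, T.card = d + 1 ∧ τ ⊆ T)
    (σ c : Finset α) (hσX : σ ∈ X) (hσ : σ.card = k + i + 1) (hi : 1 ≤ i)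
    (hc : c ⊆ σ) (hck : c.card = k) :
    faceWeight (repCplx X k) (d - k) ((σ \ c).image (fun v => insert v c))
      = faceWeight X d σ / ((k + i + 1).choose k : ℚ) := by
  obtain ⟨T, -, hT, hσT⟩ := hpure σ hσX
  have hkid : k + i ≤ d := by have := card_le_card hσT; omega
  have hσc : #(σ \ c) = i + 1 := by rw [card_sdiff_of_subset hc, hσ, hck]; omega
  have hchoose := Nat.choose_sub_mul_choose (n := d + 1) (k := k) (j := i + 1)
  rw [show d + 1 - k = d - k + 1 by omega, ← add_assoc] at hchoose
  change faceWeight _ _ (rep c σ) = _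
  simp only [faceWeight]
  rw [card_topFaces_repCplx_filter_rep_subset hclosed (by omega) hc hck (by omega),
    card_topFaces_repCplx hclosed (by omega), card_rep, hσc, hσ, div_div]
  congr 1
  norm_cast
  rw [← mul_assoc, hchoose, mul_right_comm]
end

section
/- Let X be a simplicial complex and let (u,v) be an edge of the k-dimensional representation complex R̂_k(X) (so u,v ∈ X(k), |u∩v| = k, u∪v ∈ X(k+1)). For any A ∈ C(u∩v, k-1), the vertex w = (u △ v) ∪ A forms a (k-1)-empty-triangle with u and v; i.e., {u,w} and {v,w} are edges of R̂_k(X) and {u∩v, v∩w, w∩u} is a 2-face of R̂_{k-1}(X). -/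
theorem finding_the_empty_triangles {α : Type*} [DecidableEq α]
    (X : Finset (Finset α)) (k : ℕ) (hk : 1 ≤ k)
    (hclosed : ∀ τ ∈ X, ∀ σ ⊆ τ, σ ∈ X)
    (u v : Finset α) (hu : u ∈ X) (hv : v ∈ X)
    (hcu : u.card = k + 1) (hcv : v.card = k + 1)
    (hcap : (u ∩ v).card = k) (hcup : u ∪ v ∈ X)
    (A : Finset α) (hA : A ⊆ u ∩ v) (hAcard : A.card = k - 1) :
    -- the vertex w = (u △ v) ∪ A forms a (k-1)-empty-triangle with u and v
    (((u \ v) ∪ (v \ u)) ∪ A) ∈ X ∧ (((u \ v) ∪ (v \ u)) ∪ A).card = k + 1 ∧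
    (u ∩ (((u \ v) ∪ (v \ u)) ∪ A)).card = k ∧ u ∪ (((u \ v) ∪ (v \ u)) ∪ A) ∈ X ∧
    (v ∩ (((u \ v) ∪ (v \ u)) ∪ A)).card = k ∧ v ∪ (((u \ v) ∪ (v \ u)) ∪ A) ∈ X ∧
    ({u ∩ v, v ∩ (((u \ v) ∪ (v \ u)) ∪ A),
        (((u \ v) ∪ (v \ u)) ∪ A) ∩ u} : Finset (Finset α)).card = 3 ∧
    ((u ∩ v) ∪ (v ∩ (((u \ v) ∪ (v \ u)) ∪ A)) ∪ ((((u \ v) ∪ (v \ u)) ∪ A) ∩ u)) ∈ X ∧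
    (((u ∩ v) ∩ (v ∩ (((u \ v) ∪ (v \ u)) ∪ A))) ∩ ((((u \ v) ∪ (v \ u)) ∪ A) ∩ u)).card
      = k - 1 := by
  have hA' : ∀ x ∈ A, x ∈ u ∧ x ∈ v := fun x hx => by
    have h := hA hx; rw [Finset.mem_inter] at h; exact h
  set w := ((u \ v) ∪ (v \ u)) ∪ A with hw
  have hwsub : w ⊆ u ∪ v := by
    intro x hx
    simp only [hw, Finset.mem_union, Finset.mem_sdiff] at hx ⊢
    have := hA' x; tauto
  have hwX : w ∈ X := hclosed _ hcup _ hwsub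
  have hd1 : (u \ v).card = 1 := by
    have h : u \ v = u \ (u ∩ v) := by ext x; simp [Finset.mem_sdiff]
    rw [h, Finset.card_sdiff_of_subset Finset.inter_subset_left, hcu, hcap]; omega
  have hd2 : (v \ u).card = 1 := by
    have h : v \ u = v \ (u ∩ v) := by ext x; simp [Finset.mem_sdiff]
    rw [h, Finset.card_sdiff_of_subset Finset.inter_subset_right, hcv, hcap]; omega
  obtain ⟨a, ha⟩ := Finset.card_eq_one.mp hd1
  obtain ⟨b, hb⟩ := Finset.card_eq_one.mp hd2
  have hau : a ∈ u ∧ a ∉ v := by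
    have : a ∈ u \ v := by rw [ha]; exact Finset.mem_singleton_self a
    simpa [Finset.mem_sdiff] using this
  have hbv : b ∈ v ∧ b ∉ u := by
    have : b ∈ v \ u := by rw [hb]; exact Finset.mem_singleton_self b
    simpa [Finset.mem_sdiff] using this
  have hdisj12 : Disjoint (u \ v) (v \ u) := by
    rw [Finset.disjoint_left]; intro x hx hx'
    simp [Finset.mem_sdiff] at hx hx'; tauto
  have hdisjA : Disjoint ((u \ v) ∪ (v \ u)) A := by
    rw [Finset.disjoint_left]; intro x hx hx'
    have := hA' x hx'
    simp [Finset.mem_sdiff] at hx; tauto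
  have hdisj1A : Disjoint (u \ v) A := by
    rw [Finset.disjoint_left]; intro x hx hx'
    have := hA' x hx'
    simp [Finset.mem_sdiff] at hx; tauto
  have hdisj2A : Disjoint (v \ u) A := by
    rw [Finset.disjoint_left]; intro x hx hx'
    have := hA' x hx'
    simp [Finset.mem_sdiff] at hx; tauto
  have hwcard : w.card = k + 1 := by
    rw [hw, Finset.card_union_of_disjoint hdisjA, Finset.card_union_of_disjoint hdisj12,
      hd1, hd2, hAcard]; omega
  have huw : u ∩ w = (u \ v) ∪ A := by
    ext x
    simp only [hw, Finset.mem_inter, Finset.mem_union, Finset.mem_sdiff]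
    have := hA' x; tauto
  have hvw : v ∩ w = (v \ u) ∪ A := by
    ext x
    simp only [hw, Finset.mem_inter, Finset.mem_union, Finset.mem_sdiff]
    have := hA' x; tauto
  have huwc : (u ∩ w).card = k := by
    rw [huw, Finset.card_union_of_disjoint hdisj1A, hd1, hAcard]; omega
  have hvwc : (v ∩ w).card = k := by
    rw [hvw, Finset.card_union_of_disjoint hdisj2A, hd2, hAcard]; omega
  have huwu : u ∪ w = u ∪ v := by
    ext x
    simp only [hw, Finset.mem_union, Finset.mem_sdiff]
    have := hA' x; tauto
  have hvwu : v ∪ w = u ∪ v := by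
    ext x
    simp only [hw, Finset.mem_union, Finset.mem_sdiff]
    have := hA' x; tauto
  have hwu : w ∩ u = (u \ v) ∪ A := by rw [Finset.inter_comm]; exact huw
  have haw : a ∈ w ∩ u := by
    rw [hwu, Finset.mem_union, ha]; left; exact Finset.mem_singleton_self a
  have hbw : b ∈ v ∩ w := by
    rw [hvw, Finset.mem_union, hb]; left; exact Finset.mem_singleton_self b
  have hne1 : u ∩ v ≠ v ∩ w := by
    intro h
    have : b ∈ u ∩ v := h ▸ hbw
    exact hbv.2 (Finset.mem_inter.mp this).1
  have hne2 : u ∩ v ≠ w ∩ u := by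
    intro h
    have : a ∈ u ∩ v := h ▸ haw
    exact hau.2 (Finset.mem_inter.mp this).2
  have hne3 : v ∩ w ≠ w ∩ u := by
    intro h
    have : a ∈ v ∩ w := h ▸ haw
    exact hau.2 (Finset.mem_inter.mp this).1
  have hcard3 : ({u ∩ v, v ∩ w, w ∩ u} : Finset (Finset α)).card = 3 := by
    rw [Finset.card_insert_of_notMem (by simp [hne1, hne2]),
      Finset.card_insert_of_notMem (by simp [hne3]), Finset.card_singleton]
  have hface : (u ∩ v) ∪ (v ∩ w) ∪ (w ∩ u) = u ∪ v := by
    rw [hvw, hwu]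
    ext x
    simp only [Finset.mem_union, Finset.mem_inter, Finset.mem_sdiff]
    have h := hA' x
    by_cases hxu : x ∈ u <;> by_cases hxv : x ∈ v <;> simp [hxu, hxv] <;> tauto
  have htri : ((u ∩ v) ∩ (v ∩ w)) ∩ (w ∩ u) = A := by
    rw [hvw, hwu]
    ext x
    simp only [Finset.mem_union, Finset.mem_inter, Finset.mem_sdiff]
    have h := hA' x
    by_cases hxu : x ∈ u <;> by_cases hxv : x ∈ v <;> simp [hxu, hxv] <;> tauto
  refine ⟨hwX, hwcard, huwc, huwu ▸ hcup, hvwc, hvwu ▸ hcup, hcard3, hface ▸ hcup,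
    htri ▸ hAcard⟩
end

section
/- Let X be a simplicial complex, u, v, w vertices of R̂_k(X) forming a (k-1)-empty-triangle (each pair connected by an edge of R̂_k(X), and {u∩v, v∩w, w∩u} ∈ R̂_{k-1}(X)(2)). Then w = (u △ v) ∪ A where A = u ∩ v ∩ w, and |A| = k-1. -/
theorem structure_of_an_empty_triangle {α : Type*} [DecidableEq α]
    (X : Finset (Finset α)) (k : ℕ) (hk : 1 ≤ k)
    (u v w : Finset α) (hu : u ∈ X) (hv : v ∈ X) (hw : w ∈ X)
    (hcu : u.card = k + 1) (hcv : v.card = k + 1) (hcw : w.card = k + 1)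
    (huv : (u ∩ v).card = k) (huvX : u ∪ v ∈ X)
    (hvw : (v ∩ w).card = k) (hvwX : v ∪ w ∈ X)
    (hwu : (w ∩ u).card = k) (hwuX : w ∪ u ∈ X)
    (htri3 : ({u ∩ v, v ∩ w, w ∩ u} : Finset (Finset α)).card = 3)
    (htriX : ((u ∩ v) ∪ (v ∩ w) ∪ (w ∩ u)) ∈ X)
    (htricore : (((u ∩ v) ∩ (v ∩ w)) ∩ (w ∩ u)).card = k - 1) :
    w = ((u \ v) ∪ (v \ u)) ∪ ((u ∩ v) ∩ w) ∧ ((u ∩ v) ∩ w).card = k - 1 := by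
  have hA : (u ∩ v ∩ w).card = k - 1 := by
    have he : ((u ∩ v) ∩ (v ∩ w)) ∩ (w ∩ u) = u ∩ v ∩ w := by
      ext x; simp only [Finset.mem_inter]; tauto
    rw [he] at htricore; exact htricore
  have h1 : (u \ v).card = 1 := by
    have := Finset.card_sdiff_add_card_inter u v
    omega
  have h2 : (v \ u).card = 1 := by
    have := Finset.card_sdiff_add_card_inter v u
    rw [Finset.inter_comm] at this
    omega
  have key : ∀ a b : Finset α, (a \ b).card = 1 → (a ∩ w ∩ b).card = k - 1 →
      (w ∩ a).card = k → a \ b ⊆ w := by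
    intro a b hab habw hwa
    have hsub : (a ∩ w) \ b ⊆ a \ b := by
      intro x hx; simp only [Finset.mem_sdiff, Finset.mem_inter] at *; tauto
    have hc : ((a ∩ w) \ b).card = 1 := by
      have h3 := Finset.card_sdiff_add_card_inter (a ∩ w) b
      have hwa' : (a ∩ w).card = k := by rw [Finset.inter_comm]; exact hwa
      rw [habw] at h3
      omega
    have heq := Finset.eq_of_subset_of_card_le hsub (by omega)
    intro x hx
    rw [← heq] at hx
    exact (Finset.mem_inter.mp (Finset.mem_sdiff.mp hx).1).2
  have huvw : u \ v ⊆ w := by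
    apply key u v h1 _ hwu
    · rw [show u ∩ w ∩ v = u ∩ v ∩ w by ext x; simp only [Finset.mem_inter]; tauto]
      exact hA
  have hvuw : v \ u ⊆ w := by
    apply key v u h2 _ (by rw [Finset.inter_comm]; exact hvw)
    · rw [show v ∩ w ∩ u = u ∩ v ∩ w by ext x; simp only [Finset.mem_inter]; tauto]
      exact hA
  have hsubw : ((u \ v) ∪ (v \ u)) ∪ ((u ∩ v) ∩ w) ⊆ w := by
    apply Finset.union_subset (Finset.union_subset huvw hvuw) Finset.inter_subset_right
  have d1 : Disjoint (u \ v) (v \ u) := by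
    rw [Finset.disjoint_left]; intro x hx hx'
    exact (Finset.mem_sdiff.mp hx).2 (Finset.mem_sdiff.mp hx').1
  have d2 : Disjoint ((u \ v) ∪ (v \ u)) ((u ∩ v) ∩ w) := by
    rw [Finset.disjoint_left]; intro x hx hx'
    simp only [Finset.mem_union, Finset.mem_sdiff, Finset.mem_inter] at hx hx'
    tauto
  have hcard : (((u \ v) ∪ (v \ u)) ∪ ((u ∩ v) ∩ w)).card = k + 1 := by
    rw [Finset.card_union_of_disjoint d2, Finset.card_union_of_disjoint d1, h1, h2, hA]
    omega
  refine ⟨(Finset.eq_of_subset_of_card_le hsubw (by omega)).symm, hA⟩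
end

section
/- Every edge (u,v) of the representation complex R̂_k(X) supports exactly k distinct (k-1)-empty-triangles, i.e., there are exactly k vertices w such that {u,v,w} is a (k-1)-empty-triangle. -/
theorem supported_empty_triangles {α : Type*} [DecidableEq α]
    (X : Finset (Finset α)) (k : ℕ) (hk : 1 ≤ k)
    (hclosed : ∀ τ ∈ X, ∀ σ ⊆ τ, σ ∈ X)
    (u v : Finset α) (hu : u ∈ X) (hv : v ∈ X)
    (hcu : u.card = k + 1) (hcv : v.card = k + 1)
    (hcap : (u ∩ v).card = k) (hcup : u ∪ v ∈ X) :
    -- there are exactly k vertices w forming a (k-1)-empty-triangle with u and v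
    (X.filter (fun w => w.card = k + 1 ∧
        (u ∩ w).card = k ∧ u ∪ w ∈ X ∧
        (v ∩ w).card = k ∧ v ∪ w ∈ X ∧
        ({u ∩ v, v ∩ w, w ∩ u} : Finset (Finset α)).card = 3 ∧
        ((u ∩ v) ∪ (v ∩ w) ∪ (w ∩ u)) ∈ X ∧
        (((u ∩ v) ∩ (v ∩ w)) ∩ (w ∩ u)).card = k - 1)).card = k := by
  classical
  -- extract the two "tips" x ∈ u \ v and y ∈ v \ u
  have hxd : (u \ v).card = 1 := by
    have h := Finset.card_sdiff_add_card_inter u v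
    omega
  obtain ⟨x, hx⟩ := Finset.card_eq_one.mp hxd
  have hyd : (v \ u).card = 1 := by
    have h := Finset.card_sdiff_add_card_inter v u
    rw [Finset.inter_comm] at h
    omega
  obtain ⟨y, hy⟩ := Finset.card_eq_one.mp hyd
  have hxu : x ∈ u ∧ x ∉ v := by
    have : x ∈ u \ v := by rw [hx]; simp
    simpa [Finset.mem_sdiff] using this
  have hyv : y ∈ v ∧ y ∉ u := by
    have : y ∈ v \ u := by rw [hy]; simp
    simpa [Finset.mem_sdiff] using this
  have hxy : x ≠ y := fun h => hyv.2 (h ▸ hxu.1)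
  have hcupc : (u ∪ v).card = k + 2 := by
    have h := Finset.card_union_add_card_inter u v
    omega
  -- membership trichotomy in u ∪ v
  have htri : ∀ b, b ∈ u ∪ v → b ∈ u ∩ v ∨ b = x ∨ b = y := by
    intro b hb
    rcases Finset.mem_union.mp hb with h1 | h1
    · by_cases h2 : b ∈ v
      · exact Or.inl (Finset.mem_inter.mpr ⟨h1, h2⟩)
      · have : b ∈ u \ v := Finset.mem_sdiff.mpr ⟨h1, h2⟩
        rw [hx] at this
        exact Or.inr (Or.inl (Finset.mem_singleton.mp this))
    · by_cases h2 : b ∈ u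
      · exact Or.inl (Finset.mem_inter.mpr ⟨h2, h1⟩)
      · have : b ∈ v \ u := Finset.mem_sdiff.mpr ⟨h1, h2⟩
        rw [hy] at this
        exact Or.inr (Or.inr (Finset.mem_singleton.mp this))
  have key : X.filter (fun w => w.card = k + 1 ∧
        (u ∩ w).card = k ∧ u ∪ w ∈ X ∧
        (v ∩ w).card = k ∧ v ∪ w ∈ X ∧
        ({u ∩ v, v ∩ w, w ∩ u} : Finset (Finset α)).card = 3 ∧
        ((u ∩ v) ∪ (v ∩ w) ∪ (w ∩ u)) ∈ X ∧
        (((u ∩ v) ∩ (v ∩ w)) ∩ (w ∩ u)).card = k - 1)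
      = (u ∩ v).image (fun a => (u ∪ v).erase a) := by
    ext w
    simp only [Finset.mem_filter, Finset.mem_image]
    constructor
    · rintro ⟨hwX, hwc, huw, huwX, hvw, hvwX, hthree, hunX, hintc⟩
      -- the triple intersection is just (u ∩ v) ∩ w
      have hint_eq : ((u ∩ v) ∩ (v ∩ w)) ∩ (w ∩ u) = (u ∩ v) ∩ w := by
        ext b; simp only [Finset.mem_inter]; tauto
      rw [hint_eq] at hintc
      -- x ∈ w
      have hxw : x ∈ w := by
        by_contra hxw
        have hsub : u ∩ w ⊆ (u ∩ v) ∩ w := by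
          intro b hb
          rw [Finset.mem_inter] at hb
          rw [Finset.mem_inter, Finset.mem_inter]
          refine ⟨⟨hb.1, ?_⟩, hb.2⟩
          by_contra hbv
          have : b ∈ u \ v := Finset.mem_sdiff.mpr ⟨hb.1, hbv⟩
          rw [hx] at this
          exact hxw (Finset.mem_singleton.mp this ▸ hb.2)
        have := Finset.card_le_card hsub
        omega
      have hyw : y ∈ w := by
        by_contra hyw
        have hsub : v ∩ w ⊆ (u ∩ v) ∩ w := by
          intro b hb
          rw [Finset.mem_inter] at hb
          rw [Finset.mem_inter, Finset.mem_inter]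
          refine ⟨⟨?_, hb.1⟩, hb.2⟩
          by_contra hbu
          have : b ∈ v \ u := Finset.mem_sdiff.mpr ⟨hb.1, hbu⟩
          rw [hy] at this
          exact hyw (Finset.mem_singleton.mp this ▸ hb.2)
        have := Finset.card_le_card hsub
        omega
      -- there is a unique a ∈ (u ∩ v) \ w
      have hsdc : ((u ∩ v) \ w).card = 1 := by
        have h := Finset.card_sdiff_add_card_inter (u ∩ v) w
        omega
      obtain ⟨a, ha⟩ := Finset.card_eq_one.mp hsdc
      have haS : a ∈ u ∩ v ∧ a ∉ w := by
        have : a ∈ (u ∩ v) \ w := by rw [ha]; simp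
        simpa [Finset.mem_sdiff] using this
      refine ⟨a, haS.1, ?_⟩
      -- (u ∪ v).erase a ⊆ w and both have card k+1
      have hsub : (u ∪ v).erase a ⊆ w := by
        intro b hb
        rw [Finset.mem_erase] at hb
        rcases htri b hb.2 with h1 | h1 | h1
        · by_contra hbw
          have : b ∈ (u ∩ v) \ w := Finset.mem_sdiff.mpr ⟨h1, hbw⟩
          rw [ha] at this
          exact hb.1 (Finset.mem_singleton.mp this)
        · exact h1 ▸ hxw
        · exact h1 ▸ hyw
      have hec : ((u ∪ v).erase a).card = k + 1 := by
        rw [Finset.card_erase_of_mem (Finset.mem_union.mpr (Or.inl (Finset.mem_inter.mp haS.1).1))]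
        omega
      exact Finset.eq_of_subset_of_card_le hsub (by omega)
    · rintro ⟨a, haS, rfl⟩
      have hau : a ∈ u := (Finset.mem_inter.mp haS).1
      have hav : a ∈ v := (Finset.mem_inter.mp haS).2
      have hax : a ≠ x := fun h => hxu.2 (h ▸ hav)
      have hay : a ≠ y := fun h => hyv.2 (h ▸ hau)
      have hec : ((u ∪ v).erase a).card = k + 1 := by
        rw [Finset.card_erase_of_mem (Finset.mem_union.mpr (Or.inl hau))]
        omega
      have huw : u ∩ (u ∪ v).erase a = u.erase a := by
        ext b
        simp only [Finset.mem_inter, Finset.mem_erase, Finset.mem_union]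
        tauto
      have hvw : v ∩ (u ∪ v).erase a = v.erase a := by
        ext b
        simp only [Finset.mem_inter, Finset.mem_erase, Finset.mem_union]
        tauto
      have hwu : (u ∪ v).erase a ∩ u = u.erase a := by
        rw [Finset.inter_comm]; exact huw
      have huwu : u ∪ (u ∪ v).erase a = u ∪ v := by
        ext b
        simp only [Finset.mem_union, Finset.mem_erase]
        constructor
        · tauto
        · rintro (h | h)
          · exact Or.inl h
          · by_cases hb : b = a
            · exact Or.inl (hb ▸ hau)
            · exact Or.inr ⟨hb, Or.inr h⟩
      have hvwu : v ∪ (u ∪ v).erase a = u ∪ v := by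
        ext b
        simp only [Finset.mem_union, Finset.mem_erase]
        constructor
        · tauto
        · rintro (h | h)
          · by_cases hb : b = a
            · exact Or.inl (hb ▸ hav)
            · exact Or.inr ⟨hb, Or.inl h⟩
          · exact Or.inl h
      refine ⟨hclosed _ hcup _ (Finset.erase_subset _ _), hec, ?_, ?_, ?_, ?_, ?_, ?_, ?_⟩
      · rw [huw, Finset.card_erase_of_mem hau]; omega
      · rw [huwu]; exact hcup
      · rw [hvw, Finset.card_erase_of_mem hav]; omega
      · rw [hvwu]; exact hcup
      · rw [hvw, hwu]
        have h1 : u ∩ v ≠ v.erase a := fun h => (Finset.mem_erase.mp (h ▸ haS)).1 rfl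
        have h2 : u ∩ v ≠ u.erase a := fun h => (Finset.mem_erase.mp (h ▸ haS)).1 rfl
        have h3 : v.erase a ≠ u.erase a := by
          intro h
          have : x ∈ u.erase a := Finset.mem_erase.mpr ⟨Ne.symm hax, hxu.1⟩
          rw [← h] at this
          exact hxu.2 (Finset.mem_of_mem_erase this)
        rw [Finset.card_insert_of_notMem (by simp [h1, h2]),
            Finset.card_insert_of_notMem (by simp [h3]), Finset.card_singleton]
      · refine hclosed _ hcup _ ?_
        intro b hb
        simp only [Finset.mem_union, Finset.mem_inter, Finset.mem_erase] at hb ⊢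
        tauto
      · have : ((u ∩ v) ∩ (v ∩ (u ∪ v).erase a)) ∩ ((u ∪ v).erase a ∩ u)
            = (u ∩ v).erase a := by
          ext b
          simp only [Finset.mem_inter, Finset.mem_erase, Finset.mem_union]
          tauto
        rw [this, Finset.card_erase_of_mem haS, hcap]
  rw [key, Finset.card_image_of_injOn, hcap]
  intro a ha b hb hab
  have hab' : (u ∪ v).erase a = (u ∪ v).erase b := hab
  by_contra hne
  have : a ∈ (u ∪ v).erase b := Finset.mem_erase.mpr
    ⟨hne, Finset.mem_union.mpr (Or.inl (Finset.mem_inter.mp ha).1)⟩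
  rw [← hab'] at this
  exact (Finset.mem_erase.mp this).1 rfl
end

section
/- Let X be a simplicial complex with representation complex X̂ = R̂_k(X), and let c ∈ X(k-1) be a (k-1)-face. Then the subcomplex R̂_c(X) of X̂ consisting of faces with core c (together with the vertices containing c and the empty face) is isomorphic to the link X_c of c in X, via the maps f(σ) = R(σ) \ c and g(τ) = { {i} ∪ c : i ∈ τ } (where R(σ) = ⋃σ). -/
/-- The link of a face `c` in `X`. -/
def linkOf {α : Type*} [DecidableEq α] (X : Finset (Finset α)) (c : Finset α) :
    Finset (Finset α) :=
  (X.filter (fun τ => c ⊆ τ)).image (fun τ => τ \ c)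

/-- The representation complex around the core `c`: the faces of the representation
complex of dimension ≥ 1 with core `c`, together with the vertices containing `c`
and the empty face. -/
def repAroundCore {α : Type*} [DecidableEq α] (X : Finset (Finset α)) (k : ℕ)
    (c : Finset α) : Finset (Finset (Finset α)) :=
  insert ∅ ((repCplx X k).filter
    (fun r => (2 ≤ r.card ∧ coreOf r = c) ∨ (r.card = 1 ∧ ∀ t ∈ r, c ⊆ t)))

section Aux
variable {α : Type*} [DecidableEq α]

lemma mem_coreOf' {S : Finset (Finset α)} {x : α} :
    x ∈ coreOf S ↔ x ∈ S.sup id ∧ ∀ t ∈ S, x ∈ t := by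
  simp [coreOf]

lemma mem_linkOf' {X : Finset (Finset α)} {c τ : Finset α} :
    τ ∈ linkOf X c ↔ ∃ σ, (σ ∈ X ∧ c ⊆ σ) ∧ σ \ c = τ := by
  simp [linkOf]

lemma mem_repAroundCore' {X : Finset (Finset α)} {k : ℕ} {c : Finset α}
    {r : Finset (Finset α)} :
    r ∈ repAroundCore X k c ↔ r = ∅ ∨ (r ∈ repCplx X k ∧
      ((2 ≤ r.card ∧ coreOf r = c) ∨ (r.card = 1 ∧ ∀ t ∈ r, c ⊆ t))) := by
  simp [repAroundCore, Finset.mem_filter]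

lemma mem_repCplx' {X : Finset (Finset α)} {k : ℕ} {r : Finset (Finset α)} :
    r ∈ repCplx X k ↔ (∀ t ∈ r, t ∈ X ∧ t.card = k + 1) ∧
      r.Nonempty ∧ r.sup id ∈ X ∧ (r.sup id).card = k + r.card ∧
      (2 ≤ r.card → (coreOf r).card = k) := by
  constructor
  · intro h
    rw [repCplx, Finset.mem_filter, Finset.mem_powerset] at h
    refine ⟨fun t ht => ?_, h.2⟩
    have := h.1 ht
    rw [Finset.mem_filter] at this
    exact this
  · intro h
    rw [repCplx, Finset.mem_filter, Finset.mem_powerset]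
    refine ⟨fun t ht => ?_, h.2⟩
    rw [Finset.mem_filter]
    exact h.1 t ht

/-- key structural facts for nonempty members of repAroundCore -/
lemma key_props {X : Finset (Finset α)} {k : ℕ} {c : Finset α}
    {r : Finset (Finset α)} (hr : r ∈ repAroundCore X k c) (hne : r.Nonempty) :
    (∀ t ∈ r, t ∈ X ∧ t.card = k + 1 ∧ c ⊆ t) ∧ r.sup id ∈ X ∧ c ⊆ r.sup id := by
  rcases mem_repAroundCore'.mp hr with h | ⟨hrc, hcase⟩
  · simp [h] at hne
  rw [mem_repCplx'] at hrc
  have hct : ∀ t ∈ r, c ⊆ t := by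
    rcases hcase with ⟨_, hcore⟩ | ⟨_, h⟩
    · intro t ht x hx
      rw [← hcore, mem_coreOf'] at hx
      exact hx.2 t ht
    · exact h
  refine ⟨fun t ht => ⟨(hrc.1 t ht).1, (hrc.1 t ht).2, hct t ht⟩, hrc.2.2.1, ?_⟩
  obtain ⟨t, ht⟩ := hne
  exact (hct t ht).trans (Finset.le_sup (f := id) ht)

lemma sup_image_insert {τ c : Finset α} (h : τ.Nonempty) :
    (τ.image (fun x => insert x c)).sup id = τ ∪ c := by
  ext x
  rw [Finset.sup_image]
  simp only [Finset.mem_union]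
  rw [Finset.mem_sup]
  constructor
  · rintro ⟨y, hy, hx⟩
    rcases Finset.mem_insert.mp hx with rfl | hx
    · exact Or.inl hy
    · exact Or.inr hx
  · rintro (hx | hx)
    · exact ⟨x, hx, Finset.mem_insert_self _ _⟩
    · obtain ⟨y, hy⟩ := h
      exact ⟨y, hy, Finset.mem_insert_of_mem hx⟩

/-- g ∘ f = id on repAroundCore (nonempty case handled via key_props). -/
lemma gf_eq {X : Finset (Finset α)} {k : ℕ} {c : Finset α}
    (hck : c.card = k) {r : Finset (Finset α)}
    (hr : r ∈ repAroundCore X k c) (hne : r.Nonempty) :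
    (r.sup id \ c).image (fun x => insert x c) = r := by
  obtain ⟨hall, _, _⟩ := key_props hr hne
  ext t
  simp only [Finset.mem_image, Finset.mem_sdiff]
  constructor
  · rintro ⟨x, ⟨hxsup, hxc⟩, rfl⟩
    obtain ⟨u, hu, hxu⟩ := Finset.mem_sup.mp hxsup
    obtain ⟨huX, hucard, hcu⟩ := hall u hu
    have hsub : insert x c ⊆ u := Finset.insert_subset hxu hcu
    have hcard : u.card ≤ (insert x c).card := by
      rw [Finset.card_insert_of_notMem hxc, hck, hucard]
    rwa [Finset.eq_of_subset_of_card_le hsub hcard]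
  · intro ht
    obtain ⟨htX, htcard, hct⟩ := hall t ht
    have hlt : c.card < t.card := by rw [hck, htcard]; omega
    obtain ⟨x, hxt, hxc⟩ : ∃ x ∈ t, x ∉ c := by
      by_contra h
      push_neg at h
      have := Finset.card_le_card h
      omega
    refine ⟨x, ⟨Finset.mem_sup.mpr ⟨t, ht, hxt⟩, hxc⟩, ?_⟩
    have hsub : insert x c ⊆ t := Finset.insert_subset hxt hct
    have hcard : t.card ≤ (insert x c).card := by
      rw [Finset.card_insert_of_notMem hxc, hck, htcard]
    exact Finset.eq_of_subset_of_card_le hsub hcard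

lemma insert_injOn {τ c : Finset α} (hdisj : ∀ x ∈ τ, x ∉ c) :
    Set.InjOn (fun x => insert x c) τ := by
  intro x hx y hy h
  have : x ∈ insert y c := by
    rw [show insert y c = insert x c from h.symm]
    exact Finset.mem_insert_self x c
  rcases Finset.mem_insert.mp this with h' | h'
  · exact h'
  · exact absurd h' (hdisj x hx)

end Aux

theorem rep_around_core_isomorphic_to_link {α : Type*} [DecidableEq α]
    (X : Finset (Finset α)) (k : ℕ) (hk : 1 ≤ k)
    (hclosed : ∀ τ ∈ X, ∀ σ ⊆ τ, σ ∈ X)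
    (c : Finset α) (hcX : c ∈ X) (hck : c.card = k) :
    -- f(r) = R(r) \ c  and  g(τ) = { {x} ∪ c : x ∈ τ } are mutually inverse,
    -- inclusion-preserving bijections between R̂_c(X) and the link X_c
    (∀ r ∈ repAroundCore X k c, r.sup id \ c ∈ linkOf X c) ∧
    (∀ τ ∈ linkOf X c, τ.image (fun x => insert x c) ∈ repAroundCore X k c) ∧
    (∀ r ∈ repAroundCore X k c, (r.sup id \ c).image (fun x => insert x c) = r) ∧
    (∀ τ ∈ linkOf X c, (τ.image (fun x => insert x c)).sup id \ c = τ) ∧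
    (∀ r₁ ∈ repAroundCore X k c, ∀ r₂ ∈ repAroundCore X k c,
        (r₁ ⊆ r₂ ↔ r₁.sup id \ c ⊆ r₂.sup id \ c)) ∧
    (∀ τ₁ ∈ linkOf X c, ∀ τ₂ ∈ linkOf X c,
        (τ₁ ⊆ τ₂ ↔ τ₁.image (fun x => insert x c) ⊆ τ₂.image (fun x => insert x c))) := by
  -- claim 1
  have f_mem : ∀ r ∈ repAroundCore X k c, r.sup id \ c ∈ linkOf X c := by
    intro r hr
    rcases r.eq_empty_or_nonempty with rfl | hne
    · rw [mem_linkOf']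
      exact ⟨c, ⟨hcX, subset_rfl⟩, by simp⟩
    · obtain ⟨_, hsX, hcs⟩ := key_props hr hne
      exact mem_linkOf'.mpr ⟨r.sup id, ⟨hsX, hcs⟩, rfl⟩
  -- claim 2
  have g_mem : ∀ τ ∈ linkOf X c, τ.image (fun x => insert x c) ∈ repAroundCore X k c := by
    intro τ hτ
    obtain ⟨σ, ⟨hσX, hcσ⟩, rfl⟩ := mem_linkOf'.mp hτ
    set τ := σ \ c with hτdef
    rcases τ.eq_empty_or_nonempty with hemp | hne
    · rw [hemp]
      simp [repAroundCore]
    have hdisj : ∀ x ∈ τ, x ∉ c := fun x hx => (Finset.mem_sdiff.mp hx).2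
    have hsup : (τ.image (fun x => insert x c)).sup id = σ := by
      rw [sup_image_insert hne, hτdef, Finset.sdiff_union_of_subset hcσ]
    have hcardim : (τ.image (fun x => insert x c)).card = τ.card :=
      Finset.card_image_of_injOn (insert_injOn hdisj)
    have hmemall : ∀ t ∈ τ.image (fun x => insert x c), t ∈ X ∧ t.card = k + 1 := by
      intro t ht
      obtain ⟨x, hx, rfl⟩ := Finset.mem_image.mp ht
      have hsub : insert x c ⊆ σ := Finset.insert_subset (Finset.mem_sdiff.mp hx).1 hcσ
      exact ⟨hclosed σ hσX _ hsub, by rw [Finset.card_insert_of_notMem (hdisj x hx), hck]⟩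
    have hcore : 2 ≤ (τ.image (fun x => insert x c)).card →
        coreOf (τ.image (fun x => insert x c)) = c := by
      intro h2
      ext x
      rw [mem_coreOf', hsup]
      constructor
      · rintro ⟨hxσ, hall⟩
        by_contra hxc
        rw [hcardim] at h2
        obtain ⟨y, hy, z, hz, hyz⟩ := Finset.one_lt_card.mp h2
        have h1 := hall _ (Finset.mem_image_of_mem _ hy)
        have h2' := hall _ (Finset.mem_image_of_mem _ hz)
        rcases Finset.mem_insert.mp h1 with rfl | h
        · rcases Finset.mem_insert.mp h2' with h | h
          · exact hyz h
          · exact hxc h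
        · exact hxc h
      · intro hxc
        refine ⟨hcσ hxc, ?_⟩
        intro t ht
        obtain ⟨y, _, rfl⟩ := Finset.mem_image.mp ht
        exact Finset.mem_insert_of_mem hxc
    have hrc : τ.image (fun x => insert x c) ∈ repCplx X k := by
      rw [mem_repCplx']
      refine ⟨hmemall, hne.image _, hsup ▸ hσX, ?_, fun h2 => by rw [hcore h2, hck]⟩
      rw [hsup, hcardim, hτdef, Finset.card_sdiff_of_subset hcσ]
      have := Finset.card_le_card hcσ
      omega
    rw [mem_repAroundCore']
    right
    refine ⟨hrc, ?_⟩
    rcases eq_or_lt_of_le (Nat.succ_le_of_lt (Finset.Nonempty.card_pos (hne.image (fun x => insert x c)))) with h1 | h2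
    · right
      refine ⟨h1.symm, ?_⟩
      intro t ht
      obtain ⟨y, _, rfl⟩ := Finset.mem_image.mp ht
      exact Finset.subset_insert _ _
    · exact Or.inl ⟨h2, hcore h2⟩
  -- claim 3
  have gf : ∀ r ∈ repAroundCore X k c, (r.sup id \ c).image (fun x => insert x c) = r := by
    intro r hr
    rcases r.eq_empty_or_nonempty with rfl | hne
    · simp
    · exact gf_eq hck hr hne
  -- claim 4
  have fg : ∀ τ ∈ linkOf X c, (τ.image (fun x => insert x c)).sup id \ c = τ := by
    intro τ hτ
    obtain ⟨σ, ⟨hσX, hcσ⟩, rfl⟩ := mem_linkOf'.mp hτ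
    rcases (σ \ c).eq_empty_or_nonempty with hemp | hne
    · rw [hemp]; simp
    · rw [sup_image_insert hne, Finset.union_sdiff_right, Finset.sdiff_idem]
  refine ⟨f_mem, g_mem, gf, fg, ?_, ?_⟩
  · intro r₁ hr₁ r₂ hr₂
    constructor
    · intro h
      exact Finset.sdiff_subset_sdiff (Finset.sup_mono h) subset_rfl
    · intro h
      have := Finset.image_subset_image (f := fun x => insert x c) h
      rwa [gf r₁ hr₁, gf r₂ hr₂] at this
  · intro τ₁ hτ₁ τ₂ hτ₂
    constructor
    · exact fun h => Finset.image_subset_image h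
    · intro h
      have := Finset.sdiff_subset_sdiff (Finset.sup_mono (f := id) h) (subset_rfl (a := c))
      rwa [fg τ₁ hτ₁, fg τ₂ hτ₂] at this
end

section
/- Let X be a d-dimensional simplicial complex with a distinguished set A of assignments to k-faces and distance function dist. Let F be an l-assignment on the k-faces of X, and let {π_σ}_{σ∈X(k)} be any family of permutations of [l]. Then dist(F, agreeing l-assignments) ≤ (1/l)·Σ_{i=1}^{l} dist( {F^σ_{π_σ(i)}}_{σ∈X(k)}, agreeing assignments). -/
theorem distance_decomposition {α : Type*} [DecidableEq α]
    (X : Finset (Finset α)) (k l : ℕ) (hl : 1 ≤ l)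
    (w : Finset α → ℝ) (hw : ∀ σ, 0 ≤ w σ)
    (F : Finset α → Fin l → α → Bool)
    (π : Finset α → Equiv.Perm (Fin l)) :
    -- the k-dimensional faces
    let Xk : Finset (Finset α) := X.filter (fun σ => σ.card = k + 1)
    -- distance between two l-assignments
    let distL : (Finset α → Fin l → α → Bool) → (Finset α → Fin l → α → Bool) → ℝ :=
      fun F₁ F₂ => ∑ σ ∈ Xk, w σ *
        ((Finset.univ.filter
            (fun i : Fin l => ¬ ∀ v ∈ σ, F₁ σ i v = F₂ σ i v)).card : ℝ) / l
    -- distance between two (single) assignments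
    let distS : (Finset α → α → Bool) → (Finset α → α → Bool) → ℝ :=
      fun a b => ∑ σ ∈ Xk, if ∀ v ∈ σ, a σ v = b σ v then 0 else w σ
    -- agreeing l-assignments
    let AgreeL : (Finset α → Fin l → α → Bool) → Prop := fun H =>
      ∃ g : Fin l → α → Bool, ∀ σ ∈ Xk, ∃ ρ : Equiv.Perm (Fin l),
        ∀ i : Fin l, ∀ v ∈ σ, H σ (ρ i) v = g i v
    -- agreeing assignments
    let AgreeS : (Finset α → α → Bool) → Prop := fun a =>
      ∃ g : α → Bool, ∀ σ ∈ Xk, ∀ v ∈ σ, a σ v = g v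
    sInf {x : ℝ | ∃ H, AgreeL H ∧ x = distL F H}
      ≤ (1 / l) * ∑ i : Fin l,
          sInf {x : ℝ | ∃ b, AgreeS b ∧ x = distS (fun σ => F σ (π σ i)) b} := by
  intro Xk distL distS AgreeL AgreeS
  have hl0 : (0:ℝ) < l := by exact_mod_cast hl
  apply le_of_forall_pos_le_add
  intro ε hε
  have hne : ∀ i : Fin l,
      {x : ℝ | ∃ b, AgreeS b ∧ x = distS (fun σ => F σ (π σ i)) b}.Nonempty := by
    intro i
    exact ⟨_, fun _ _ => false, ⟨fun _ => false, fun σ _ v _ => rfl⟩, rfl⟩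
  have hpick : ∀ i : Fin l, ∃ g : α → Bool,
      distS (fun σ => F σ (π σ i)) (fun _ v => g v)
        < sInf {x : ℝ | ∃ b, AgreeS b ∧ x = distS (fun σ => F σ (π σ i)) b} + ε := by
    intro i
    obtain ⟨x, ⟨b, ⟨g, hg⟩, rfl⟩, hx⟩ := Real.lt_sInf_add_pos (hne i) hε
    refine ⟨g, lt_of_le_of_lt (le_of_eq ?_) hx⟩
    refine Finset.sum_congr rfl fun σ hσ => ?_
    refine if_congr ⟨fun h v hv => ?_, fun h v hv => ?_⟩ rfl rfl
    · rw [h v hv, hg σ hσ v hv]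
    · rw [h v hv]; simpa using hg σ hσ v hv
  choose g hg using hpick
  set H : Finset α → Fin l → α → Bool := fun σ j v => g ((π σ).symm j) v with hH
  have hmem : distL F H ∈ {x : ℝ | ∃ H, AgreeL H ∧ x = distL F H} := by
    refine ⟨H, ⟨g, fun σ hσ => ⟨π σ, fun i v hv => ?_⟩⟩, rfl⟩
    simp [hH]
  have hbdd : BddBelow {x : ℝ | ∃ H, AgreeL H ∧ x = distL F H} := by
    refine ⟨0, fun x hx => ?_⟩
    obtain ⟨H', -, rfl⟩ := hx
    refine Finset.sum_nonneg fun σ _ => ?_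
    exact div_nonneg (mul_nonneg (hw σ) (Nat.cast_nonneg _)) (Nat.cast_nonneg _)
  refine le_trans (csInf_le hbdd hmem) ?_
  have key : distL F H = ∑ i : Fin l,
      ((1:ℝ)/l) * distS (fun σ => F σ (π σ i)) (fun _ v => g i v) := by
    unfold distL distS
    simp only [Finset.mul_sum]
    rw [Finset.sum_comm]
    refine Finset.sum_congr rfl fun σ hσ => ?_
    rw [← Finset.mul_sum, Finset.sum_ite, Finset.sum_const_zero, zero_add,
      Finset.sum_const, nsmul_eq_mul]
    have hcard : (Finset.univ.filter
          (fun i : Fin l => ¬ ∀ v ∈ σ, F σ (π σ i) v = g i v)).card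
        = (Finset.univ.filter
          (fun j : Fin l => ¬ ∀ v ∈ σ, F σ j v = H σ j v)).card := by
      refine Finset.card_bij (fun i _ => π σ i) ?_ ?_ ?_
      · intro i hi
        simp only [Finset.mem_filter, Finset.mem_univ, true_and] at hi ⊢
        intro h
        exact hi fun v hv => by rw [h v hv]; simp [hH]
      · intro a ha b hb hab
        exact (π σ).injective hab
      · intro j hj
        refine ⟨(π σ).symm j, ?_, by simp⟩
        simp only [Finset.mem_filter, Finset.mem_univ, true_and] at hj ⊢
        intro h
        exact hj fun v hv => by simpa [hH] using h v hv
    rw [hcard]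
    ring
  rw [key]
  have hstep : ∀ i : Fin l,
      ((1:ℝ)/l) * distS (fun σ => F σ (π σ i)) (fun _ v => g i v)
        ≤ (1/l) * (sInf {x : ℝ | ∃ b, AgreeS b ∧ x = distS (fun σ => F σ (π σ i)) b} + ε) := by
    intro i
    exact mul_le_mul_of_nonneg_left (le_of_lt (hg i)) (by positivity)
  calc ∑ i : Fin l, ((1:ℝ)/l) * distS (fun σ => F σ (π σ i)) (fun _ v => g i v)
      ≤ ∑ i : Fin l, (1/l) * (sInf {x : ℝ | ∃ b, AgreeS b ∧ x = distS (fun σ => F σ (π σ i)) b} + ε) :=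
        Finset.sum_le_sum fun i _ => hstep i
    _ = (1/l) * ∑ i : Fin l, sInf {x : ℝ | ∃ b, AgreeS b ∧ x = distS (fun σ => F σ (π σ i)) b} + ε := by
        simp only [mul_add, Finset.sum_add_distrib, ← Finset.mul_sum, Finset.sum_const,
          Finset.card_univ, Fintype.card_fin, nsmul_eq_mul]
        field_simp
end
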